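/- Let (X,d) be a compact metric space. The map sending a nonempty closed set K ⊆ X to the set F_K of Borel probability measures on X supported in K is an isometry from the hyperspace of nonempty closed subsets of X with the Hausdorff distance H_d into the hyperspace of nonempty closed subsets of the space of Borel probability measures on X with the Hausdorff distance induced by the Monge–Kantorovich metric ρ_d. -/

import Mathlib

open Topology Filter Set MeasureTheory

variable {X : Type*} [MetricSpace X] [CompactSpace X] [MeasurableSpace X] [BorelSpace X]

/-- The support of a probability measure: points all of whose open neighbourhoods have
positive measure. -/
def msupport {X : Type*} [TopologicalSpace X] [MeasurableSpace X]
    (μ : ProbabilityMeasure X) : Set X :=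
  {x | ∀ U : Set X, IsOpen U → x ∈ U → 0 < (μ : Measure X) U}

/-- `F_K`: the Borel probability measures supported in `K`. -/
def FF {X : Type*} [TopologicalSpace X] [MeasurableSpace X] (K : Set X) :
    Set (ProbabilityMeasure X) :=
  {μ | msupport μ ⊆ K}

/-- The Monge–Kantorovich distance. -/
noncomputable def mkDist {X : Type*} [MetricSpace X] [MeasurableSpace X]
    (μ ν : ProbabilityMeasure X) : ℝ :=
  ⨆ f : {f : X → ℝ // LipschitzWith 1 f},
    |∫ x, f.1 x ∂(μ : Measure X) - ∫ x, f.1 x ∂(ν : Measure X)|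

/-- The Hausdorff distance associated to a distance function `ρ`. -/
noncomputable def hDist {Y : Type*} (ρ : Y → Y → ℝ) (A B : Set Y) : ℝ :=
  sInf {r : ℝ | 0 < r ∧ (∀ a ∈ A, ∃ b ∈ B, ρ a b < r) ∧ (∀ b ∈ B, ∃ a ∈ A, ρ a b < r)}

/-! ### Auxiliary lemmas -/

lemma lip_integrable {f : X → ℝ} (hf : LipschitzWith 1 f) (μ : Measure X)
    [IsFiniteMeasure μ] : Integrable f μ :=
  hf.continuous.integrable_of_hasCompactSupport (HasCompactSupport.of_compactSpace _)

lemma prob_nonempty (μ : ProbabilityMeasure X) : Nonempty X := by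
  by_contra h
  rw [not_nonempty_iff] at h
  have h1 : (μ : Measure X) univ = 1 := measure_univ
  rw [Set.univ_eq_empty_iff.2 h, measure_empty] at h1
  exact zero_ne_one h1

lemma abs_integral_sub_le (μ ν : ProbabilityMeasure X) {f : X → ℝ} (hf : LipschitzWith 1 f) :
    |∫ x, f x ∂(μ : Measure X) - ∫ x, f x ∂(ν : Measure X)|
      ≤ 2 * Metric.diam (univ : Set X) := by
  have : Nonempty X := prob_nonempty μ
  obtain ⟨x₀⟩ := this
  have key : ∀ κ : ProbabilityMeasure X,
      |∫ x, f x ∂(κ : Measure X) - f x₀| ≤ Metric.diam (univ : Set X) := by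
    intro κ
    have h1 : ∫ x, f x ∂(κ : Measure X) - f x₀ = ∫ x, (f x - f x₀) ∂(κ : Measure X) := by
      rw [integral_sub (lip_integrable hf _) (integrable_const _), integral_const]
      simp
    rw [h1]
    have h2 : ∀ x, ‖f x - f x₀‖ ≤ Metric.diam (univ : Set X) := by
      intro x
      have := hf.dist_le_mul x x₀
      simp only [NNReal.coe_one, one_mul] at this
      calc ‖f x - f x₀‖ = dist (f x) (f x₀) := by rw [Real.norm_eq_abs, Real.dist_eq]
        _ ≤ dist x x₀ := this
        _ ≤ Metric.diam (univ : Set X) :=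
            Metric.dist_le_diam_of_mem isCompact_univ.isBounded trivial trivial
    calc |∫ x, (f x - f x₀) ∂(κ : Measure X)| = ‖∫ x, (f x - f x₀) ∂(κ : Measure X)‖ := rfl
      _ ≤ Metric.diam (univ : Set X) * ((κ : Measure X) univ).toReal :=
          norm_integral_le_of_norm_le_const (Filter.Eventually.of_forall h2)
      _ = Metric.diam (univ : Set X) := by simp
  calc |∫ x, f x ∂(μ : Measure X) - ∫ x, f x ∂(ν : Measure X)|
      = |(∫ x, f x ∂(μ : Measure X) - f x₀) - (∫ x, f x ∂(ν : Measure X) - f x₀)| := by ring_nf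
    _ ≤ |∫ x, f x ∂(μ : Measure X) - f x₀| + |∫ x, f x ∂(ν : Measure X) - f x₀| :=
        abs_sub _ _
    _ ≤ 2 * Metric.diam (univ : Set X) := by
        have := key μ; have := key ν; linarith

lemma le_mkDist (μ ν : ProbabilityMeasure X) {f : X → ℝ} (hf : LipschitzWith 1 f) :
    |∫ x, f x ∂(μ : Measure X) - ∫ x, f x ∂(ν : Measure X)| ≤ mkDist μ ν := by
  apply le_ciSup (f := fun g : {f : X → ℝ // LipschitzWith 1 f} =>
    |∫ x, g.1 x ∂(μ : Measure X) - ∫ x, g.1 x ∂(ν : Measure X)|)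
    (c := ⟨f, hf⟩)
  refine ⟨2 * Metric.diam (univ : Set X), ?_⟩
  rintro y ⟨g, rfl⟩
  exact abs_integral_sub_le μ ν g.2

lemma mkDist_le (μ ν : ProbabilityMeasure X) {r : ℝ}
    (h : ∀ f : X → ℝ, LipschitzWith 1 f →
      |∫ x, f x ∂(μ : Measure X) - ∫ x, f x ∂(ν : Measure X)| ≤ r) :
    mkDist μ ν ≤ r := by
  have : Nonempty {f : X → ℝ // LipschitzWith 1 f} :=
    ⟨⟨fun _ => 0, (LipschitzWith.const 0).weaken (by norm_num)⟩⟩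
  exact ciSup_le fun g => h g.1 g.2

lemma mkDist_comm (μ ν : ProbabilityMeasure X) : mkDist μ ν = mkDist ν μ := by
  unfold mkDist
  congr 1
  ext g
  rw [abs_sub_comm]

lemma measure_compl_msupport (μ : ProbabilityMeasure X) :
    (μ : Measure X) (msupport μ)ᶜ = 0 := by
  have hex : ∀ x : ((msupport μ)ᶜ : Set X),
      ∃ U : Set X, IsOpen U ∧ (x : X) ∈ U ∧ (μ : Measure X) U = 0 := by
    rintro ⟨x, hx⟩
    by_contra hcon
    push_neg at hcon
    apply hx
    intro U hU hxU
    rcases (Ne.lt_or_gt (hcon U hU hxU)) with h | h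
    · exact absurd h (by simp)
    · exact h
  choose U hUo hxU hU0 using hex
  have hsub : ((msupport μ)ᶜ : Set X) ⊆ ⋃ x, U x := fun x hx =>
    mem_iUnion.2 ⟨⟨x, hx⟩, hxU ⟨x, hx⟩⟩
  obtain ⟨T, hTc, hTU⟩ := TopologicalSpace.isOpen_iUnion_countable U hUo
  rw [← hTU] at hsub
  refine measure_mono_null hsub ?_
  exact (measure_biUnion_null_iff hTc).2 fun i _ => hU0 i

lemma FF_compl_null {K : Set X} {μ : ProbabilityMeasure X} (hμ : μ ∈ FF K) :
    (μ : Measure X) Kᶜ = 0 :=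
  measure_mono_null (compl_subset_compl.2 hμ) (measure_compl_msupport μ)

/-- Dirac delta as a probability measure. -/
noncomputable def pdirac (x : X) : ProbabilityMeasure X :=
  ⟨MeasureTheory.Measure.dirac x, inferInstance⟩

lemma pdirac_mem_FF {K : Set X} (hK : IsClosed K) {x : X} (hx : x ∈ K) :
    pdirac x ∈ FF K := by
  intro z hz
  by_contra hzK
  have h := hz Kᶜ hK.isOpen_compl hzK
  have : (pdirac x : Measure X) Kᶜ = 0 := by
    rw [show (pdirac x : Measure X) = MeasureTheory.Measure.dirac x from rfl,
      MeasureTheory.Measure.dirac_apply' _ hK.measurableSet.compl]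
    simp [Set.indicator_of_notMem, hx]
  rw [this] at h
  exact lt_irrefl 0 h

lemma integral_pdirac (f : X → ℝ) (hf : Continuous f) (x : X) :
    ∫ z, f z ∂(pdirac x : Measure X) = f x := by
  rw [show (pdirac x : Measure X) = MeasureTheory.Measure.dirac x from rfl]
  exact integral_dirac f x

lemma mkDist_pdirac (x y : X) : mkDist (pdirac x) (pdirac y) = dist x y := by
  apply le_antisymm
  · apply mkDist_le
    intro f hf
    rw [integral_pdirac f hf.continuous, integral_pdirac f hf.continuous]
    have := hf.dist_le_mul x y
    simp only [NNReal.coe_one, one_mul] at this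
    calc |f x - f y| = dist (f x) (f y) := by rw [Real.dist_eq]
      _ ≤ dist x y := this
  · have h := le_mkDist (pdirac x) (pdirac y) (Metric.lipschitz_infDist_pt ({y} : Set X))
    have hc : Continuous fun z : X => Metric.infDist z ({y} : Set X) :=
      (Metric.lipschitz_infDist_pt ({y} : Set X)).continuous
    rw [integral_pdirac _ hc, integral_pdirac _ hc, Metric.infDist_singleton,
      Metric.infDist_singleton, dist_self, sub_zero] at h
    exact le_trans (le_abs_self _) h

/-! ### Piecewise constant maps -/

/-- Map each point of the first set in the list containing it to the associated value,
otherwise `y₀`. -/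
noncomputable def pieceMap {X : Type*} (y₀ : X) : List (Set X × X) → X → X
  | [] => fun _ => y₀
  | p :: l => fun z =>
      letI : ∀ j : X, Decidable (j ∈ p.1) := fun _ => Classical.propDecidable _
      if z ∈ p.1 then p.2 else pieceMap y₀ l z

lemma pieceMap_measurable {X : Type*} [MeasurableSpace X] (y₀ : X) (l : List (Set X × X))
    (h : ∀ p ∈ l, MeasurableSet p.1) : Measurable (pieceMap y₀ l) := by
  induction l with
  | nil => exact measurable_const
  | cons p l ih =>
    have hm := h p List.mem_cons_self
    have ih' := ih fun q hq => h q (List.mem_cons_of_mem p hq)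
    show Measurable fun z => _
    simp only [pieceMap]
    exact Measurable.ite hm measurable_const ih'

lemma pieceMap_mem {X : Type*} (y₀ : X) (l : List (Set X × X)) {S : Set X} (h0 : y₀ ∈ S)
    (h : ∀ p ∈ l, p.2 ∈ S) (z : X) : pieceMap y₀ l z ∈ S := by
  induction l with
  | nil => exact h0
  | cons p l ih =>
    by_cases hz : z ∈ p.1
    · simpa [pieceMap, Set.piecewise, hz] using h p List.mem_cons_self
    · simpa [pieceMap, Set.piecewise, hz] using ih fun q hq => h q (List.mem_cons_of_mem p hq)

lemma pieceMap_dist {X : Type*} [MetricSpace X] {s : ℝ} (y₀ : X) (l : List (Set X × X))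
    (h : ∀ p ∈ l, ∀ z ∈ p.1, dist z p.2 < s) {z : X} (hz : ∃ p ∈ l, z ∈ p.1) :
    dist z (pieceMap y₀ l z) < s := by
  induction l with
  | nil => obtain ⟨p, hp, _⟩ := hz; exact absurd hp List.not_mem_nil
  | cons p l ih =>
    by_cases hzp : z ∈ p.1
    · simpa [pieceMap, Set.piecewise, hzp] using h p List.mem_cons_self z hzp
    · obtain ⟨q, hq, hzq⟩ := hz
      rcases List.mem_cons.1 hq with rfl | hq'
      · exact absurd hzq hzp
      · simpa [pieceMap, Set.piecewise, hzp] using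
          ih (fun q hq => h q (List.mem_cons_of_mem p hq)) ⟨q, hq', hzq⟩

/-! ### The two key directions -/

lemma backward_dir {K K' : Set X} (hK : IsClosed K) (hK' : IsClosed K') (hK'ne : K'.Nonempty)
    {r : ℝ} (h : ∀ μ ∈ FF K, ∃ ν ∈ FF K', mkDist μ ν < r) :
    ∀ x ∈ K, ∃ y ∈ K', dist x y < r := by
  intro x hx
  obtain ⟨ν, hν, hlt⟩ := h (pdirac x) (pdirac_mem_FF hK hx)
  have hf := Metric.lipschitz_infDist_pt K'
  have h1 := le_mkDist (pdirac x) ν hf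
  have h2 : ∫ z, Metric.infDist z K' ∂(ν : Measure X) = 0 := by
    have hae : (fun z => Metric.infDist z K') =ᵐ[(ν : Measure X)] (fun _ => 0) := by
      have hK'c : (ν : Measure X) K'ᶜ = 0 := FF_compl_null hν
      filter_upwards [(MeasureTheory.ae_iff (p := fun z => z ∈ K')).2 (by exact hK'c)]
        with z hz
      exact Metric.infDist_zero_of_mem hz
    rw [integral_congr_ae hae, integral_zero]
  rw [integral_pdirac _ hf.continuous, h2, sub_zero] at h1
  have : Metric.infDist x K' < r := lt_of_le_of_lt (le_trans (le_abs_self _) h1) hlt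
  exact (Metric.infDist_lt_iff hK'ne).1 this

lemma forward_dir {K K' : Set X} (hK : IsClosed K) (hKne : K.Nonempty)
    (hK' : IsClosed K') (hK'ne : K'.Nonempty) {r : ℝ}
    (h : ∀ x ∈ K, ∃ y ∈ K', dist x y < r) :
    ∀ μ ∈ FF K, ∃ ν ∈ FF K', mkDist μ ν < r := by
  intro μ hμ
  have hKc : IsCompact K := hK.isCompact
  -- the max of the distance function to K' on K
  have hg : Continuous fun x : X => Metric.infDist x K' :=
    (Metric.lipschitz_infDist_pt K').continuous
  obtain ⟨x₀, hx₀K, hmax⟩ := hKc.exists_isMaxOn hKne hg.continuousOn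
  set m : ℝ := Metric.infDist x₀ K' with hm
  have hmr : m < r := by
    obtain ⟨y, hy, hdy⟩ := h x₀ hx₀K
    exact lt_of_le_of_lt (Metric.infDist_le_dist_of_mem hy) hdy
  set s : ℝ := (m + r) / 2 with hs
  have hms : m < s := by simp only [hs]; linarith
  have hsr : s < r := by
    have : 0 ≤ m := Metric.infDist_nonneg
    simp only [hs]; linarith
  have hxs : ∀ x : K, ∃ y ∈ K', dist (x : X) y < s := by
    rintro ⟨x, hx⟩
    have : Metric.infDist x K' < s := lt_of_le_of_lt (hmax hx) hms
    exact (Metric.infDist_lt_iff hK'ne).1 this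
  choose y hyK' hyd using hxs
  -- cover K by balls on which sending to y _ moves points less than s
  set U : K → Set X := fun x => Metric.ball (x : X) (s - dist (x : X) (y x)) with hU
  have hcov : K ⊆ ⋃ x, U x := by
    intro z hz
    refine mem_iUnion.2 ⟨⟨z, hz⟩, ?_⟩
    simp only [hU, Metric.mem_ball, dist_self]
    linarith [hyd ⟨z, hz⟩]
  obtain ⟨t, ht⟩ := hKc.elim_finite_subcover U (fun x => Metric.isOpen_ball) hcov
  obtain ⟨y₀, hy₀⟩ := hK'ne
  set l : List (Set X × X) := t.toList.map (fun x => (U x, y x)) with hl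
  set T : X → X := pieceMap y₀ l with hT
  have hlmeas : ∀ p ∈ l, MeasurableSet p.1 := by
    rintro p hp
    rw [hl, List.mem_map] at hp
    obtain ⟨x, _, rfl⟩ := hp
    exact Metric.isOpen_ball.measurableSet
  have hTmeas : Measurable T := pieceMap_measurable y₀ l hlmeas
  have hTK' : ∀ z, T z ∈ K' := by
    intro z
    refine pieceMap_mem y₀ l hy₀ ?_ z
    rintro p hp
    rw [hl, List.mem_map] at hp
    obtain ⟨x, _, rfl⟩ := hp
    exact hyK' x
  have hldist : ∀ p ∈ l, ∀ z ∈ p.1, dist z p.2 < s := by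
    rintro p hp z hz
    rw [hl, List.mem_map] at hp
    obtain ⟨x, _, rfl⟩ := hp
    simp only [hU, Metric.mem_ball] at hz
    calc dist z (y x) ≤ dist z (x : X) + dist (x : X) (y x) := dist_triangle _ _ _
      _ < s := by linarith
  have hTdist : ∀ z ∈ K, dist z (T z) < s := by
    intro z hz
    refine pieceMap_dist y₀ l hldist ?_
    have := ht hz
    rw [mem_iUnion₂] at this
    obtain ⟨x, hxt, hzx⟩ := this
    exact ⟨(U x, y x), by rw [hl, List.mem_map]; exact ⟨x, Finset.mem_toList.2 hxt, rfl⟩, hzx⟩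
  -- the image measure
  have hprob : IsProbabilityMeasure ((μ : Measure X).map T) :=
    Measure.isProbabilityMeasure_map hTmeas.aemeasurable
  refine ⟨⟨(μ : Measure X).map T, hprob⟩, ?_, ?_⟩
  · intro z hz
    by_contra hzK'
    have hpos := hz K'ᶜ hK'.isOpen_compl hzK'
    have : ((μ : Measure X).map T) K'ᶜ = 0 := by
      rw [MeasureTheory.Measure.map_apply hTmeas hK'.measurableSet.compl]
      have : T ⁻¹' K'ᶜ = ∅ := by
        ext w; simp [hTK' w]
      rw [this, measure_empty]
    exact absurd this hpos.ne'
  · refine lt_of_le_of_lt (mkDist_le _ _ ?_) hsr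
    intro f hf
    show |∫ x, f x ∂(μ : Measure X) - ∫ x, f x ∂((μ : Measure X).map T)| ≤ s
    rw [integral_map hTmeas.aemeasurable hf.continuous.aestronglyMeasurable]
    have hint1 : Integrable f (μ : Measure X) := lip_integrable hf _
    have hint2 : Integrable (fun z => f (T z)) (μ : Measure X) := by
      haveI := hprob
      exact (MeasureTheory.integrable_map_measure hf.continuous.aestronglyMeasurable
        hTmeas.aemeasurable).1 (lip_integrable hf _)
    rw [← integral_sub hint1 hint2]
    have hae : ∀ᵐ z ∂(μ : Measure X), ‖f z - f (T z)‖ ≤ s := by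
      have hKnull : (μ : Measure X) Kᶜ = 0 := FF_compl_null hμ
      filter_upwards [(MeasureTheory.ae_iff (p := fun z => z ∈ K)).2 (by exact hKnull)]
        with z hz
      have h1 := hf.dist_le_mul z (T z)
      simp only [NNReal.coe_one, one_mul] at h1
      calc ‖f z - f (T z)‖ = dist (f z) (f (T z)) := by rw [Real.norm_eq_abs, Real.dist_eq]
        _ ≤ dist z (T z) := h1
        _ ≤ s := (hTdist z hz).le
    calc |∫ z, (f z - f (T z)) ∂(μ : Measure X)|
        = ‖∫ z, (f z - f (T z)) ∂(μ : Measure X)‖ := rfl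
      _ ≤ s * ((μ : Measure X) univ).toReal := norm_integral_le_of_norm_le_const hae
      _ = s := by simp

/-- Proposition 2.2: `K ↦ F_K` is an isometry from the hyperspace of nonempty closed subsets
of `X` with the Hausdorff distance `H_d` into the hyperspace of closed subsets of the
probability measures with the Hausdorff distance induced by the Monge–Kantorovich metric. -/
theorem stmt9 (K K' : Set X) (hK : IsClosed K) (hKne : K.Nonempty)
    (hK' : IsClosed K') (hK'ne : K'.Nonempty) :
    hDist mkDist (FF K) (FF K') = hDist dist K K' := by
  unfold hDist
  congr 1
  ext r
  simp only [mem_setOf_eq]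
  constructor
  · rintro ⟨hr, h1, h2⟩
    refine ⟨hr, backward_dir hK hK' hK'ne h1, ?_⟩
    have h2' : ∀ μ ∈ FF K', ∃ ν ∈ FF K, mkDist μ ν < r := by
      intro μ hμ
      obtain ⟨ν, hν, hd⟩ := h2 μ hμ
      exact ⟨ν, hν, by rwa [mkDist_comm]⟩
    intro b hb
    obtain ⟨a, ha, hd⟩ := backward_dir hK' hK hKne h2' b hb
    exact ⟨a, ha, by rwa [dist_comm]⟩
  · rintro ⟨hr, h1, h2⟩
    refine ⟨hr, forward_dir hK hKne hK' hK'ne h1, ?_⟩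
    have h2' : ∀ x ∈ K', ∃ y ∈ K, dist x y < r := by
      intro x hx
      obtain ⟨a, ha, hd⟩ := h2 x hx
      exact ⟨a, ha, by rwa [dist_comm]⟩
    intro ν hν
    obtain ⟨μ, hμ, hd⟩ := forward_dir hK' hK'ne hK hKne h2' ν hν
    exact ⟨μ, hμ, by rwa [mkDist_comm]⟩
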